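/- arXiv:1806.11285 — 2 statements merged into one kernel-verified Lean document; each statement's English description precedes it below -/
import Mathlib

section
/- Let h, h_1, ..., h_n be jointly independent random variables, each exponentially distributed with rate 1, let θ ≥ 0 and let a_1, ..., a_n be positive real numbers. Then the probability that h ≥ θ · Σ_{k=1}^n a_k h_k equals Π_{k=1}^n 1/(1 + θ a_k). -/
/-!
Condition on the interferers: the sum `S = θ ∑ aₖ hₖ` is nonnegative and independent of `h`, and
`P(h ≥ s) = e^{-s}` for `s ≥ 0`, so the probability equals `E[e^{-S}]`. By independence this
Laplace transform factors into `∏ E[e^{-θ aₖ hₖ}]`, and each factor is `1 / (1 + θ aₖ)`.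
-/

open MeasureTheory ProbabilityTheory Real Set

namespace ProbabilityTheory

lemma expMeasure_eq_withDensity (r : ℝ) :
    expMeasure r = volume.withDensity (exponentialPDF r) := rfl

instance nullSingletonClass_expMeasure (r : ℝ) : NullSingletonClass (expMeasure r) :=
  inferInstanceAs (NullSingletonClass (volume.withDensity _))

lemma expMeasure_Ici {r x : ℝ} (hr : 0 < r) (hx : 0 ≤ x) :
    expMeasure r (Ici x) = ENNReal.ofReal (rexp (-(r * x))) := by
  have := isProbabilityMeasure_expMeasure hr
  rw [← measure_congr Ioi_ae_eq_Ici, ← compl_Iic, prob_compl_eq_one_sub measurableSet_Iic,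
    ← ofReal_cdf, cdf_expMeasure_eq hr, if_pos hx, ← ENNReal.ofReal_one,
    ← ENNReal.ofReal_sub _ (by simp [mul_nonneg hr.le hx] : (0:ℝ) ≤ 1 - rexp (-(r * x)))]
  simp

lemma ae_nonneg_expMeasure (r : ℝ) : ∀ᵐ x ∂expMeasure r, 0 ≤ x := by
  rw [ae_iff, expMeasure_eq_withDensity, withDensity_apply _ (by measurability)]
  simp only [not_le]
  exact lintegral_exponentialPDF_of_nonpos le_rfl

lemma exponentialPDF_mul_exp_neg_mul {r c : ℝ} (h : 0 < r + c) (x : ℝ) :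
    exponentialPDF r x * ENNReal.ofReal (rexp (-(c * x)))
      = ENNReal.ofReal (r / (r + c)) * exponentialPDF (r + c) x := by
  rcases lt_or_ge x 0 with hx | hx
  · simp [exponentialPDF_of_neg hx]
  rw [exponentialPDF_of_nonneg hx, exponentialPDF_of_nonneg hx,
    ← ENNReal.ofReal_mul' (exp_nonneg _), ← ENNReal.ofReal_mul' (by positivity)]
  congr 1
  field_simp
  rw [mul_assoc, ← exp_add]
  ring_nf

lemma lintegral_exp_neg_mul_expMeasure {r c : ℝ} (h : 0 < r + c) :
    ∫⁻ x, ENNReal.ofReal (rexp (-(c * x))) ∂expMeasure r = ENNReal.ofReal (r / (r + c)) := by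
  have hpdf (r : ℝ) : Measurable (exponentialPDF r) :=
    (measurable_exponentialPDFReal r).ennreal_ofReal
  rw [expMeasure_eq_withDensity, lintegral_withDensity_eq_lintegral_mul _ (hpdf r) (by fun_prop)]
  simp only [Pi.mul_apply, exponentialPDF_mul_exp_neg_mul h]
  rw [lintegral_const_mul _ (hpdf _), lintegral_exponentialPDF_eq_one h, mul_one]

variable {Ω : Type*} [MeasurableSpace Ω] {μ : Measure Ω}

lemma IndepFun.measure_le_eq_lintegral_exp [IsFiniteMeasure μ] {X Y : Ω → ℝ} {r : ℝ}
    (hr : 0 < r) (hXY : IndepFun X Y μ) (hX : AEMeasurable X μ) (hX0 : 0 ≤ᵐ[μ] X)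
    (hY : HasLaw Y (expMeasure r) μ) :
    μ {ω | X ω ≤ Y ω} = ∫⁻ ω, ENNReal.ofReal (rexp (-(r * X ω))) ∂μ := by
  have := isProbabilityMeasure_expMeasure hr
  have hle : MeasurableSet {p : ℝ × ℝ | p.1 ≤ p.2} := measurableSet_le measurable_fst measurable_snd
  calc μ {ω | X ω ≤ Y ω} = μ.map (fun ω ↦ (X ω, Y ω)) {p | p.1 ≤ p.2} :=
        (Measure.map_apply_of_aemeasurable (hX.prodMk hY.aemeasurable) hle).symm
    _ = ((μ.map X).prod (expMeasure r)) {p | p.1 ≤ p.2} := by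
        rw [(indepFun_iff_map_prod_eq_prod_map_map hX hY.aemeasurable).1 hXY, hY.map_eq]
    _ = ∫⁻ x, expMeasure r (Ici x) ∂μ.map X := Measure.prod_apply hle
    _ = ∫⁻ x, ENNReal.ofReal (rexp (-(r * x))) ∂μ.map X := by
        refine lintegral_congr_ae ?_
        filter_upwards [(ae_map_iff hX measurableSet_Ici).2 hX0] with x hx
        exact expMeasure_Ici hr hx
    _ = ∫⁻ ω, ENNReal.ofReal (rexp (-(r * X ω))) ∂μ := lintegral_map' (by fun_prop) hX

lemma lintegral_prod_eq_prod_lintegral_of_indepFun₀ {ι : Type*} (s : Finset ι)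
    {X : ι → Ω → ENNReal} (hX : iIndepFun X μ) (hXm : ∀ i, AEMeasurable (X i) μ) :
    ∫⁻ ω, ∏ i ∈ s, X i ω ∂μ = ∏ i ∈ s, ∫⁻ ω, X i ω ∂μ := by
  have hmk : ∀ᵐ ω ∂μ, ∀ i ∈ s, X i ω = (hXm i).mk _ ω :=
    s.eventually_all.2 fun i _ ↦ (hXm i).ae_eq_mk
  calc ∫⁻ ω, ∏ i ∈ s, X i ω ∂μ = ∫⁻ ω, ∏ i ∈ s, (hXm i).mk _ ω ∂μ :=
        lintegral_congr_ae (hmk.mono fun ω hω ↦ Finset.prod_congr rfl hω)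
    _ = ∏ i ∈ s, ∫⁻ ω, (hXm i).mk _ ω ∂μ :=
        lintegral_prod_eq_prod_lintegral_of_indepFun s _
          (hX.congr fun i ↦ (hXm i).ae_eq_mk) fun i ↦ (hXm i).measurable_mk
    _ = ∏ i ∈ s, ∫⁻ ω, X i ω ∂μ :=
        Finset.prod_congr rfl fun i _ ↦ lintegral_congr_ae (hXm i).ae_eq_mk.symm

lemma iIndepFun.lintegral_exp_neg_sum {ι : Type*} (s : Finset ι) {X : ι → Ω → ℝ}
    (hX : iIndepFun X μ) (hXm : ∀ i, AEMeasurable (X i) μ) :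
    ∫⁻ ω, ENNReal.ofReal (rexp (-∑ i ∈ s, X i ω)) ∂μ
      = ∏ i ∈ s, ∫⁻ ω, ENNReal.ofReal (rexp (-X i ω)) ∂μ := by
  simp only [← Finset.sum_neg_distrib, exp_sum,
    ENNReal.ofReal_prod_of_nonneg fun i _ ↦ (exp_nonneg _)]
  exact lintegral_prod_eq_prod_lintegral_of_indepFun₀ s
    (hX.comp (fun _ x ↦ ENNReal.ofReal (rexp (-x))) fun _ ↦ by fun_prop)
    fun i ↦ by fun_prop

lemma iIndepFun.indepFun_zero_succ {n : ℕ} {β : Fin (n + 1) → Type*}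
    {mβ : ∀ i, MeasurableSpace (β i)} {X : ∀ i, Ω → β i} (hX : iIndepFun X μ)
    (hXm : ∀ i, AEMeasurable (X i) μ) :
    IndepFun (X 0) (fun ω (k : Fin n) ↦ X k.succ ω) μ := by
  have hdisj : Disjoint {0} (Finset.univ.map (Fin.succEmb n)) := by simp
  exact (hX.indepFun_finset₀ _ _ hdisj hXm).comp (_mγ := mβ 0) (_mγ' := MeasurableSpace.pi)
    (φ := fun v ↦ v ⟨0, Finset.mem_singleton_self 0⟩)
    (ψ := fun v (k : Fin n) ↦ v ⟨k.succ, by simp⟩) (measurable_pi_apply _)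
    (measurable_pi_lambda _ fun _ ↦ measurable_pi_apply _)

end ProbabilityTheory

theorem prob_exp_ge_theta_weighted_sum_general
    {Ω : Type*} [MeasurableSpace Ω] (μ : Measure Ω) [IsProbabilityMeasure μ]
    (n : ℕ) (H : Fin (n + 1) → Ω → ℝ)
    (hindep : iIndepFun H μ)
    (hexp : ∀ k, μ.map (H k) = expMeasure 1)
    (θ : ℝ) (hθ : 0 ≤ θ) (a : Fin n → ℝ) (ha : ∀ k, 0 < a k) :
    μ {ω | θ * ∑ k : Fin n, a k * H k.succ ω ≤ H 0 ω}
      = ENNReal.ofReal (∏ k : Fin n, 1 / (1 + θ * a k)) := by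
  have := isProbabilityMeasure_expMeasure one_pos
  have hlaw (k) : HasLaw (H k) (expMeasure 1) μ :=
    ⟨.of_map_ne_zero (by rw [hexp k]; exact IsProbabilityMeasure.ne_zero _), hexp k⟩
  have hHm (k) : AEMeasurable (H k) μ := (hlaw k).aemeasurable
  set S : Ω → ℝ := fun ω ↦ θ * ∑ k : Fin n, a k * H k.succ ω
  have hS : AEMeasurable S μ := by fun_prop
  have hS_indep : IndepFun S (H 0) μ :=
    ((hindep.indepFun_zero_succ hHm).comp measurable_id
      (by fun_prop : Measurable fun v : Fin n → ℝ ↦ θ * ∑ k, a k * v k)).symm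
  have hS_nonneg : 0 ≤ᵐ[μ] S := by
    have hH_nonneg : ∀ᵐ ω ∂μ, ∀ k, 0 ≤ H k ω := ae_all_iff.2 fun k ↦
      ae_of_ae_map (hHm k) (by rw [hexp k]; exact ae_nonneg_expMeasure 1)
    filter_upwards [hH_nonneg] with ω hω
    exact mul_nonneg hθ (Finset.sum_nonneg fun k _ ↦ mul_nonneg (ha k).le (hω _))
  have hθa (k) : 0 ≤ θ * a k := mul_nonneg hθ (ha k).le
  have hG : iIndepFun (fun k ω ↦ θ * a k * H k.succ ω) μ :=
    (hindep.precomp (Fin.succ_injective n)).comp _ fun k ↦ measurable_const_mul (θ * a k)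
  calc μ {ω | S ω ≤ H 0 ω} = ∫⁻ ω, ENNReal.ofReal (rexp (-(1 * S ω))) ∂μ :=
        hS_indep.measure_le_eq_lintegral_exp one_pos hS hS_nonneg (hlaw 0)
    _ = ∫⁻ ω, ENNReal.ofReal (rexp (-∑ k, θ * a k * H k.succ ω)) ∂μ := by
        simp only [S, one_mul, Finset.mul_sum, mul_assoc]
    _ = ∏ k, ∫⁻ ω, ENNReal.ofReal (rexp (-(θ * a k * H k.succ ω))) ∂μ :=
        hG.lintegral_exp_neg_sum _ fun k ↦ (hHm _).const_mul _
    _ = ∏ k, ENNReal.ofReal (1 / (1 + θ * a k)) := Finset.prod_congr rfl fun k _ ↦ by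
        rw [(hlaw k.succ).lintegral_comp (f := fun x ↦ ENNReal.ofReal (rexp (-(θ * a k * x))))
          (by fun_prop), lintegral_exp_neg_mul_expMeasure (by linarith [hθa k])]
    _ = ENNReal.ofReal (∏ k, 1 / (1 + θ * a k)) :=
        (ENNReal.ofReal_prod_of_nonneg fun k _ ↦ one_div_nonneg.2 (by linarith [hθa k])).symm

/-- Let `h = H 0, h_1 = H 1, ..., h_n = H n` be jointly independent random variables, each
exponentially distributed with rate 1, let `θ ≥ 0` and let `a 1, ..., a n` be positive reals.
Then `P[h ≥ θ ∑_k a_k h_k] = ∏_k 1 / (1 + θ a_k)`. -/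
theorem prob_exp_ge_theta_weighted_sum
    {Ω : Type*} [MeasurableSpace Ω] (μ : Measure Ω) [IsProbabilityMeasure μ]
    (n : ℕ) (H : Fin (n + 1) → Ω → ℝ)
    (hmeas : ∀ k, Measurable (H k))
    (hindep : iIndepFun H μ)
    (hexp : ∀ k, μ.map (H k) = expMeasure 1)
    (θ : ℝ) (hθ : 0 ≤ θ) (a : Fin n → ℝ) (ha : ∀ k, 0 < a k) :
    μ {ω | θ * ∑ k : Fin n, a k * H k.succ ω ≤ H 0 ω}
      = ENNReal.ofReal (∏ k : Fin n, 1 / (1 + θ * a k)) :=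
  prob_exp_ge_theta_weighted_sum_general μ n H hindep hexp θ hθ a ha
end

section
/- Let Q be an n × n real matrix with nonnegative off-diagonal entries and zero row sums, let A be a subset of the index set, and let Q̂ be the matrix obtained from Q by replacing every row whose index is not in A by the zero row. Then for every t ≥ 0, every index i, and every j ∈ A, the matrix exponentials satisfy (exp(t Q̂))_{ij} ≤ (exp(t Q))_{ij}. Consequently, for every nonnegative row vector v, Σ_{j∈A} (v ⬝ exp(t Q̂))_j ≤ Σ_{j∈A} (v ⬝ exp(t Q))_j. -/
/-!
Uniformization: for `c ≥ 0` with `Q i i + c ≥ 0` for all `i`, the matrices `Q + c • 1` and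
`Qhat + c • 1` are entrywise nonnegative, and `exp (t • Q) = exp (-t c) • exp (t • (Q + c • 1))`,
so it suffices to compare the powers of the shifted matrices entrywise. An entry `(i, j)` of a
power is a sum of weights of paths from `i` to `j`; for `j ∈ A`, a path of `Qhat + c • 1` cannot
pass through a state outside `A` (such a row is `c` times a unit row, so the path could never
leave that state), hence it is a path of `Q + c • 1` of no larger weight.
-/

open NormedSpace Nat

namespace Matrix

variable {ι : Type*} [Fintype ι] [DecidableEq ι]

theorem hasSum_exp_apply (M : Matrix ι ι ℝ) (i j : ι) :
    HasSum (fun k : ℕ => (k ! : ℝ)⁻¹ * (M ^ k) i j) (exp M i j) := by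
  let _ := Matrix.linftyOpNormedRing (n := ι) (α := ℝ)
  let _ := Matrix.linftyOpNormedAlgebra (n := ι) (R := ℝ) (α := ℝ)
  exact Pi.hasSum.mp (Pi.hasSum.mp (exp_series_hasSum_exp' (𝕂 := ℝ) M) i) j

theorem exp_apply_le_exp_apply {M N : Matrix ι ι ℝ} {i j : ι}
    (h : ∀ k : ℕ, (N ^ k) i j ≤ (M ^ k) i j) : exp N i j ≤ exp M i j :=
  hasSum_le (fun k => mul_le_mul_of_nonneg_left (h k) (by positivity))
    (hasSum_exp_apply N i j) (hasSum_exp_apply M i j)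

theorem exp_add_smul_one (M : Matrix ι ι ℝ) (r : ℝ) :
    exp (M + r • 1) = Real.exp r • exp M := by
  rw [exp_add_of_commute _ _ ((Commute.one_right M).smul_right r), smul_one_eq_diagonal,
    exp_diagonal, Pi.exp_def, ← Real.exp_eq_exp_ℝ, ← smul_one_eq_diagonal, mul_smul_comm,
    mul_one]

theorem exp_smul_eq_exp_smul_add_smul_one (Q : Matrix ι ι ℝ) (t c : ℝ) :
    exp (t • Q) = Real.exp (-(t * c)) • exp (t • (Q + c • 1)) := by
  rw [← exp_add_smul_one]
  congr 1
  module

theorem pow_apply_le_pow_apply_of_rowwise_le {α : Type*} [Semiring α] [PartialOrder α]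
    [IsOrderedRing α] {M N : Matrix ι ι α} {s : Set ι}
    (hM : ∀ i j, 0 ≤ M i j) (hN : ∀ i j, 0 ≤ N i j)
    (hle : ∀ i ∈ s, ∀ j, N i j ≤ M i j) (hzero : ∀ i ∉ s, ∀ j ∈ s, N i j = 0)
    (k : ℕ) (i : ι) {j : ι} (hj : j ∈ s) : (N ^ k) i j ≤ (M ^ k) i j := by
  induction k generalizing j with
  | zero => rw [pow_zero, pow_zero]
  | succ k ih =>
    rw [pow_succ, pow_succ, mul_apply, mul_apply]
    refine Finset.sum_le_sum fun l _ => ?_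
    by_cases hl : l ∈ s
    · exact mul_le_mul (ih hl) (hle l hl j) (hN l j) (pow_apply_nonneg hM k i l)
    · rw [hzero l hl j hj, mul_zero]
      exact mul_nonneg (pow_apply_nonneg hM k i l) (hM l j)

theorem exists_nonneg_add_smul_one {Q : Matrix ι ι ℝ} (hoff : ∀ i j, i ≠ j → 0 ≤ Q i j) :
    ∃ c : ℝ, 0 ≤ c ∧ ∀ i j, 0 ≤ (Q + c • 1) i j := by
  refine ⟨∑ i, |Q i i|, by positivity, fun i j => ?_⟩
  rcases eq_or_ne i j with rfl | hij
  · have := Finset.single_le_sum (fun l _ => abs_nonneg (Q l l)) (Finset.mem_univ i)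
    simp only [add_apply, smul_apply, one_apply_eq, smul_eq_mul, mul_one]
    linarith [neg_abs_le (Q i i)]
  · simpa [one_apply_ne hij] using hoff i j hij

theorem exp_smul_apply_le_of_rows {Q Qhat : Matrix ι ι ℝ} {s : Set ι}
    (hoff : ∀ i j, i ≠ j → 0 ≤ Q i j) (hmem : ∀ i ∈ s, Qhat i = Q i)
    (hnotMem : ∀ i ∉ s, Qhat i = 0) {t : ℝ} (ht : 0 ≤ t) (i : ι) {j : ι} (hj : j ∈ s) :
    exp (t • Qhat) i j ≤ exp (t • Q) i j := by
  obtain ⟨c, hc, hQc⟩ := exists_nonneg_add_smul_one hoff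
  set M := t • (Q + c • 1)
  set N := t • (Qhat + c • 1)
  have hM : ∀ i j, 0 ≤ M i j := fun i j => mul_nonneg ht (hQc i j)
  have hN_of_mem : ∀ i ∈ s, ∀ j, N i j = M i j := fun i hi j => by
    simp [N, M, hmem i hi]
  have hN_of_notMem : ∀ i ∉ s, ∀ j, N i j = t * (c * (1 : Matrix ι ι ℝ) i j) :=
    fun i hi j => by simp [N, hnotMem i hi]
  have hN : ∀ i j, 0 ≤ N i j := fun i j => by
    by_cases hi : i ∈ s
    · exact hN_of_mem i hi j ▸ hM i j
    · rw [hN_of_notMem i hi j, one_apply]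
      split_ifs <;> positivity
  rw [exp_smul_eq_exp_smul_add_smul_one Q t c, exp_smul_eq_exp_smul_add_smul_one Qhat t c]
  refine mul_le_mul_of_nonneg_left (exp_apply_le_exp_apply fun k => ?_) (Real.exp_nonneg _)
  refine pow_apply_le_pow_apply_of_rowwise_le hM hN (fun l hl j => (hN_of_mem l hl j).le)
    (fun l hl j hj => ?_) k i hj
  rw [hN_of_notMem l hl j, one_apply_ne (ne_of_mem_of_not_mem hj hl).symm]
  simp

end Matrix

theorem reliability_le_availability_general {n : ℕ} (Q : Matrix (Fin n) (Fin n) ℝ)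
    (hoff : ∀ i j, i ≠ j → 0 ≤ Q i j)
    (A : Finset (Fin n))
    (Qhat : Matrix (Fin n) (Fin n) ℝ)
    (hQhat : ∀ i j, Qhat i j = if i ∈ A then Q i j else 0)
    (t : ℝ) (ht : 0 ≤ t) :
    (∀ i j, j ∈ A →
      (NormedSpace.exp (t • Qhat)) i j ≤ (NormedSpace.exp (t • Q)) i j) ∧
    (∀ v : Fin n → ℝ, (∀ i, 0 ≤ v i) →
      ∑ j ∈ A, Matrix.vecMul v (NormedSpace.exp (t • Qhat)) j ≤
        ∑ j ∈ A, Matrix.vecMul v (NormedSpace.exp (t • Q)) j) := by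
  have hexp : ∀ i j, j ∈ A → exp (t • Qhat) i j ≤ exp (t • Q) i j :=
    fun i j hj => Matrix.exp_smul_apply_le_of_rows (s := A) hoff
      (fun i hi => funext fun j => by simp [hQhat, Finset.mem_coe.mp hi])
      (fun i hi => funext fun j => by simp [hQhat, Finset.mem_coe.not.mp hi]) ht i hj
  refine ⟨hexp, fun v hv => Finset.sum_le_sum fun j hj => ?_⟩
  simp only [Matrix.vecMul, dotProduct]
  exact Finset.sum_le_sum fun i _ => mul_le_mul_of_nonneg_left (hexp i j hj) (hv i)

/-- Reliability is bounded by availability: if `Q` is a generator matrix (nonnegative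
off-diagonal entries, zero row sums), `A` a set of (available) states and `Qhat` the matrix
obtained from `Q` by zeroing out every row with index outside `A`, then each entry
`(exp (t Qhat)) i j` with `j ∈ A` is at most `(exp (t Q)) i j` for `t ≥ 0`; consequently for
every nonnegative initial row vector `v`,
`∑_{j ∈ A} (v ⬝ exp (t Qhat)) j ≤ ∑_{j ∈ A} (v ⬝ exp (t Q)) j`. -/
theorem reliability_le_availability {n : ℕ} (Q : Matrix (Fin n) (Fin n) ℝ)
    (hoff : ∀ i j, i ≠ j → 0 ≤ Q i j) (hrow : ∀ i, ∑ j, Q i j = 0)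
    (A : Finset (Fin n))
    (Qhat : Matrix (Fin n) (Fin n) ℝ)
    (hQhat : ∀ i j, Qhat i j = if i ∈ A then Q i j else 0)
    (t : ℝ) (ht : 0 ≤ t) :
    (∀ i j, j ∈ A →
      (NormedSpace.exp (t • Qhat)) i j ≤ (NormedSpace.exp (t • Q)) i j) ∧
    (∀ v : Fin n → ℝ, (∀ i, 0 ≤ v i) →
      ∑ j ∈ A, Matrix.vecMul v (NormedSpace.exp (t • Qhat)) j ≤
        ∑ j ∈ A, Matrix.vecMul v (NormedSpace.exp (t • Q)) j) :=
  reliability_le_availability_general Q hoff A Qhat hQhat t ht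
end
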